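/- For any connected graph G that is not a complete graph, Udim(G) ≤ CCW(G): G is the intersection of CCW(G) unit incomparability graphs on the vertex set V(G). -/
import Mathlib


open SimpleGraph

variable {V : Type*}

/-- An ordered clique cover of `G`, encoded as a labeling `f : V → ℕ` whose
fibers (the cliques `C_i = f⁻¹(i)`) are cliques of `G`. -/
def IsOrderedCliqueCover (G : SimpleGraph V) (f : V → ℕ) : Prop :=
  ∀ n : ℕ, G.IsClique {v | f v = n}

/-- The width `W(C)` of an ordered clique cover: the maximum of `|j - i|` over
edges `xy` of `G` with `x ∈ C_i`, `y ∈ C_j`. -/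
noncomputable def coverWidth (G : SimpleGraph V) (f : V → ℕ) : ℕ :=
  sSup {d : ℕ | ∃ x y, G.Adj x y ∧ d = Nat.dist (f x) (f y)}

/-- The clique cover width `CCW(G)`: minimum width over ordered clique covers. -/
noncomputable def CCW (G : SimpleGraph V) : ℕ :=
  sInf {w : ℕ | ∃ f : V → ℕ, IsOrderedCliqueCover G f ∧ coverWidth G f = w}

/-- `s(G)`: the maximum number of leaves of an induced star in `G`
(an independent set whose members are all adjacent to a common center `r`
outside the set); defined as `1` when `|V(G)| ≤ 2`. -/
noncomputable def starNum (G : SimpleGraph V) [Fintype V] : ℕ :=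
  if Fintype.card V ≤ 2 then 1
  else sSup {k : ℕ | ∃ (r : V) (L : Finset V), r ∉ L ∧ Gᶜ.IsClique (L : Set V) ∧
    (∀ v ∈ L, G.Adj r v) ∧ L.card = k}

/-- `Udim(G)`: the smallest `d` such that `G` is the intersection of `d`
unit incomparability graphs (graphs `H` with `CCW(H) ≤ 1`) on `V(G)`. -/
noncomputable def Udim (G : SimpleGraph V) : ℕ :=
  sInf {d : ℕ | ∃ H : Fin d → SimpleGraph V, (∀ i, CCW (H i) ≤ 1) ∧
    ∀ x y, G.Adj x y ↔ ∀ i, (H i).Adj x y}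

private lemma div_dist_le_one {w a b i : ℕ} (hw : 0 < w) (h : Nat.dist a b ≤ w) :
    Nat.dist ((a + i) / w) ((b + i) / w) ≤ 1 := by
  wlog hab : a ≤ b generalizing a b
  · rw [Nat.dist_comm] at h ⊢
    exact this h (le_of_not_ge hab)
  have h1 : (a + i) / w ≤ (b + i) / w := Nat.div_le_div_right (by omega)
  have h2 : b + i ≤ a + i + w := by
    rw [Nat.dist_eq_sub_of_le hab] at h; omega
  have h3 : (b + i) / w ≤ (a + i) / w + 1 := by
    calc (b + i) / w ≤ (a + i + w) / w := Nat.div_le_div_right h2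
      _ = (a + i) / w + 1 := Nat.add_div_right _ hw
  rw [Nat.dist_eq_sub_of_le h1]; omega

private lemma exists_split {w a b : ℕ} (hw : 0 < w) (hab : a < b) :
    ∃ i < w, (a + i) / w < (b + i) / w := by
  refine ⟨w - 1 - a % w, by omega, ?_⟩
  have hr : a % w < w := Nat.mod_lt _ hw
  have hdm := Nat.div_add_mod a w
  have hcomm : w * (a / w) = a / w * w := Nat.mul_comm _ _
  have ha : a + (w - 1 - a % w) = (w - 1) + (a / w) * w := by omega
  have h1 : (a + (w - 1 - a % w)) / w = a / w := by
    rw [ha, Nat.add_mul_div_right _ _ hw, Nat.div_eq_of_lt (by omega), Nat.zero_add]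
  have h2 : (a / w + 1) * w ≤ b + (w - 1 - a % w) := by
    have he : (a / w + 1) * w = a / w * w + w := by ring
    omega
  have h3 : a / w + 1 ≤ (b + (w - 1 - a % w)) / w := (Nat.le_div_iff_mul_le hw).mpr h2
  omega

/-- for connected non-complete `G`, `Udim(G) ≤ CCW(G)`: `G` is
the intersection of `CCW(G)` unit incomparability graphs on `V(G)`. -/
theorem stmt10 [Fintype V] (G : SimpleGraph V) (hc : G.Connected) (hnc : G ≠ ⊤) :
    Udim G ≤ CCW G ∧
    ∃ H : Fin (CCW G) → SimpleGraph V, (∀ i, CCW (H i) ≤ 1) ∧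
      ∀ x y, G.Adj x y ↔ ∀ i, (H i).Adj x y := by
  classical
  -- the defining set of CCW is nonempty
  have hne : {w : ℕ | ∃ f : V → ℕ, IsOrderedCliqueCover G f ∧ coverWidth G f = w}.Nonempty := by
    refine ⟨_, fun v => ((Fintype.equivFin V) v : ℕ), fun n => ?_, rfl⟩
    intro x hx y hy hxy
    exact absurd ((Fintype.equivFin V).injective (Fin.ext (hx.trans hy.symm))) hxy
  obtain ⟨f, hf, hwf⟩ : ∃ f : V → ℕ, IsOrderedCliqueCover G f ∧ coverWidth G f = CCW G :=
    Nat.sInf_mem hne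
  set w := CCW G with hwdef
  have bdd : BddAbove {d : ℕ | ∃ x y, G.Adj x y ∧ d = Nat.dist (f x) (f y)} := by
    refine ⟨Finset.univ.sup (fun p : V × V => Nat.dist (f p.1) (f p.2)), ?_⟩
    rintro d ⟨x, y, -, rfl⟩
    exact Finset.le_sup (f := fun p : V × V => Nat.dist (f p.1) (f p.2))
      (Finset.mem_univ (x, y))
  have edge_bound : ∀ x y, G.Adj x y → Nat.dist (f x) (f y) ≤ w := by
    intro x y h
    have : Nat.dist (f x) (f y) ≤ coverWidth G f := le_csSup bdd ⟨x, y, h, rfl⟩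
    omega
  -- w is positive
  have hw1 : 0 < w := by
    rcases Nat.eq_zero_or_pos w with h0 | h
    swap
    · exact h
    exfalso
    have hedge : ∀ x y, G.Adj x y → f x = f y := by
      intro x y h
      have hb := edge_bound x y h
      rw [h0] at hb
      exact Nat.eq_of_dist_eq_zero (Nat.le_zero.mp hb)
    have key : ∀ x y : V, G.Reachable x y → f x = f y := by
      intro x y h
      obtain ⟨p⟩ := h
      induction p with
      | nil => rfl
      | cons h p ih => exact (hedge _ _ h).trans ih
    apply hnc
    ext x y
    simp only [top_adj]
    constructor
    · exact fun h => h.ne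
    · intro hxy
      have hfeq : f x = f y := key x y (hc.preconnected x y)
      exact hf (f x) (Set.mem_setOf_eq ▸ rfl) (hfeq.symm) hxy
  -- the construction
  set g : Fin w → V → ℕ := fun i v => (f v + (i : ℕ)) / w with hg
  set H : Fin w → SimpleGraph V :=
    fun i => SimpleGraph.fromRel (fun x y => g i x = g i y ∨ G.Adj x y) with hH
  have hH1 : ∀ i, CCW (H i) ≤ 1 := by
    intro i
    have cov : IsOrderedCliqueCover (H i) (g i) := by
      intro n x hx y hy hxy
      exact ⟨hxy, Or.inl (Or.inl (hx.trans hy.symm))⟩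
    have wid : coverWidth (H i) (g i) ≤ 1 := by
      apply csSup_le'
      rintro d ⟨x, y, hxy, rfl⟩
      rw [hH, SimpleGraph.fromRel_adj] at hxy
      rcases hxy with ⟨-, (heq | hadj) | (heq | hadj)⟩
      · rw [heq]; simp [Nat.dist_self]
      · exact div_dist_le_one hw1 (edge_bound x y hadj)
      · rw [heq]; simp [Nat.dist_self]
      · rw [Nat.dist_comm]
        exact div_dist_le_one hw1 (edge_bound y x hadj)
    have : CCW (H i) ≤ coverWidth (H i) (g i) := Nat.sInf_le ⟨g i, cov, rfl⟩
    omega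
  have hH2 : ∀ x y, G.Adj x y ↔ ∀ i, (H i).Adj x y := by
    intro x y
    constructor
    · intro h i
      rw [hH, SimpleGraph.fromRel_adj]
      exact ⟨h.ne, Or.inl (Or.inr h)⟩
    · intro h
      by_contra hna
      have hxy : x ≠ y := by
        have := h ⟨0, hw1⟩
        rw [hH, SimpleGraph.fromRel_adj] at this
        exact this.1
      have hfne : f x ≠ f y := by
        intro heq
        exact hna (hf (f x) (rfl : f x = f x) (heq.symm : f y = f x) hxy)
      have main : ∀ i : Fin w, g i x = g i y ∨ G.Adj x y ∨ G.Adj y x := by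
        intro i
        have := h i
        rw [hH, SimpleGraph.fromRel_adj] at this
        rcases this with ⟨-, (heq | hadj) | (heq | hadj)⟩
        · exact Or.inl heq
        · exact Or.inr (Or.inl hadj)
        · exact Or.inl heq.symm
        · exact Or.inr (Or.inr hadj)
      have noadj : ∀ i : Fin w, g i x = g i y := by
        intro i
        rcases main i with heq | hadj | hadj
        · exact heq
        · exact absurd hadj hna
        · exact absurd hadj.symm hna
      rcases Nat.lt_or_ge (f x) (f y) with hlt | hge
      · obtain ⟨i, hiw, hsplit⟩ := exists_split hw1 hlt
        have := noadj ⟨i, hiw⟩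
        simp only [hg] at this
        omega
      · have hlt : f y < f x := lt_of_le_of_ne hge (Ne.symm hfne)
        obtain ⟨i, hiw, hsplit⟩ := exists_split hw1 hlt
        have := noadj ⟨i, hiw⟩
        simp only [hg] at this
        omega
  exact ⟨Nat.sInf_le ⟨H, hH1, hH2⟩, H, hH1, hH2⟩
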